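/- arXiv:2009.13285 — 2 statements merged into one kernel-verified Lean document; each statement's English description precedes it below -/
import Mathlib

section
/- Let p ≥ 1 be an integer, let e_p be a primitive p-th root of unity in ℂ, and let m ≥ 1 be an integer. Then for every natural number k and every natural number n with 0 ≤ n ≤ p−1, the chain sum satisfies T_m(k·p + n ; e_p) = m^k · T_m(n ; e_p). -/
/-- Evaluation at `ζ : ℂ` of the Gaussian binomial coefficient `[n choose k]_q ∈ ℤ[q]`,
defined by the `q`-Pascal recursion, agreeing with
`∏_{i=1}^{k} (1−q^{n−k+i})/(1−q^i)` for `k ≤ n` and with `0` for `k > n`. -/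
def qbinom : ℕ → ℕ → ℂ → ℂ
  | _, 0, _ => 1
  | 0, _ + 1, _ => 0
  | n + 1, k + 1, ζ => qbinom n k ζ + ζ ^ (k + 1) * qbinom n (k + 1) ζ

/-- The chain sum `T_{m+1}(N;q)`: the sum over integer sequences
`N = t_{m+1} ≥ t_m ≥ … ≥ t_1 ≥ 0` of `∏_{j=1}^{m} q^{t_j(t_j+1)} [t_{j+1} choose t_j]_q`,
where a chain is encoded as a monotone function `f : Fin (m+1) → Fin (N+1)`
with top value `N` (so `f i = t_{i+1}`). -/
noncomputable def chainT (m N : ℕ) (q : ℂ) : ℂ :=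
  ∑ f ∈ Finset.univ.filter
      (fun f : Fin (m + 1) → Fin (N + 1) => Monotone f ∧ f (Fin.last m) = Fin.last N),
    ∏ i : Fin m,
      q ^ ((f i.castSucc : ℕ) * ((f i.castSucc : ℕ) + 1)) *
        qbinom (f i.succ : ℕ) (f i.castSucc : ℕ) q

open Finset

/-!
At a primitive `p`-th root of unity `e` the Gaussian binomials obey the `q`-Lucas theorem
`[a p + b choose c p + d]_e = (a choose c) [b choose d]_e` for `b, d < p`, which follows from
`[n + p choose k]_e = [n choose k]_e + [n choose k - p]_e`, itself a consequence of
`[p choose j]_e = 0` for `0 < j < p`. Removing the top step of a chain gives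
`T_{m+1}(N) = ∑_t e^{t(t+1)} [N choose t]_e T_m(t)`. For `N = k p + n`, write `t = s p + r`:
the weight `e^{t(t+1)}` only depends on `r`, `q`-Lucas splits off `(k choose s)`, and by induction
on the chain length `T_m(s p + r) = m^s T_m(r)`. The sum then factors as
`(∑_s (k choose s) m^s) · T_{m+1}(n) = (m + 1)^k T_{m+1}(n)`.
-/

lemma qbinom_zero_right (n : ℕ) (q : ℂ) : qbinom n 0 q = 1 := by
  cases n <;> rfl

lemma qbinom_eq_zero_of_lt {n k : ℕ} (h : n < k) (q : ℂ) : qbinom n k q = 0 := by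
  induction n generalizing k with
  | zero => obtain ⟨k, rfl⟩ := Nat.exists_eq_add_of_lt h; rfl
  | succ n ih =>
    obtain ⟨k, rfl⟩ : ∃ j, k = j + 1 := ⟨k - 1, by omega⟩
    rw [qbinom, ih (by omega), ih (by omega), mul_zero, add_zero]

lemma qbinom_self (n : ℕ) (q : ℂ) : qbinom n n q = 1 := by
  induction n with
  | zero => rfl
  | succ n ih => rw [qbinom, ih, qbinom_eq_zero_of_lt n.lt_succ_self, mul_zero, add_zero]

noncomputable def qFactorial (n : ℕ) (q : ℂ) : ℂ := ∏ i ∈ range n, (1 - q ^ (i + 1))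

lemma qFactorial_succ (n : ℕ) (q : ℂ) :
    qFactorial (n + 1) q = qFactorial n q * (1 - q ^ (n + 1)) :=
  prod_range_succ _ n

lemma qbinom_mul_qFactorial_mul_qFactorial {n k : ℕ} (h : k ≤ n) (q : ℂ) :
    qbinom n k q * (qFactorial k q * qFactorial (n - k) q) = qFactorial n q := by
  induction n generalizing k with
  | zero =>
    obtain rfl : k = 0 := by omega
    simp [qbinom_zero_right, qFactorial]
  | succ n ih =>
    obtain rfl | ⟨k, rfl⟩ : k = 0 ∨ ∃ j, k = j + 1 := by cases k <;> simp
    · simp [qbinom_zero_right, qFactorial]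
    obtain rfl | hk : k = n ∨ k < n := by omega
    · simp [qbinom_self, qFactorial]
    obtain ⟨d, rfl⟩ : ∃ d, n = k + 1 + d := ⟨n - (k + 1), by omega⟩
    have h₁ := ih (k := k) (by omega)
    have h₂ := ih (k := k + 1) (by omega)
    rw [show k + 1 + d - k = d + 1 by omega, qFactorial_succ d] at h₁
    rw [show k + 1 + d - (k + 1) = d by omega, qFactorial_succ k] at h₂
    rw [qbinom, show k + 1 + d + 1 - (k + 1) = d + 1 by omega, qFactorial_succ d,
      qFactorial_succ k, qFactorial_succ (k + 1 + d)]
    linear_combination (1 - q ^ (k + 1)) * h₁ + q ^ (k + 1) * (1 - q ^ (d + 1)) * h₂ +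
      qFactorial (k + 1 + d) q * (pow_add q (k + 1) (d + 1)).symm

section RootOfUnity

variable {p : ℕ} {e : ℂ}

lemma qFactorial_ne_zero (he : IsPrimitiveRoot e p) {j : ℕ} (hj : j < p) : qFactorial j e ≠ 0 :=
  prod_ne_zero_iff.mpr fun i hi =>
    sub_ne_zero.mpr
      (he.pow_ne_one_of_pos_of_lt i.succ_ne_zero (lt_of_le_of_lt (mem_range.mp hi) hj)).symm

lemma qbinom_eq_zero_of_isPrimitiveRoot (he : IsPrimitiveRoot e p) {j : ℕ} (hj₀ : 0 < j)
    (hjp : j < p) : qbinom p j e = 0 := by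
  have hfac : qFactorial p e = 0 := by
    obtain ⟨p, rfl⟩ : ∃ i, p = i + 1 := ⟨p - 1, by omega⟩
    rw [qFactorial_succ, he.pow_eq_one, sub_self, mul_zero]
  have h := qbinom_mul_qFactorial_mul_qFactorial hjp.le e
  rw [hfac] at h
  exact (mul_eq_zero.mp h).resolve_right
    (mul_ne_zero (qFactorial_ne_zero he hjp) (qFactorial_ne_zero he (by omega)))

lemma qbinom_add_of_isPrimitiveRoot (he : IsPrimitiveRoot e p) (hp : 0 < p) (n k : ℕ) :
    qbinom (n + p) k e = qbinom n k e + if p ≤ k then qbinom n (k - p) e else 0 := by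
  induction n generalizing k with
  | zero =>
    rw [zero_add]
    obtain rfl | hk := k.eq_zero_or_pos
    · simp [qbinom_zero_right, hp.ne']
    rcases lt_trichotomy k p with h | rfl | h
    · rw [if_neg h.not_ge, qbinom_eq_zero_of_isPrimitiveRoot he hk h, qbinom_eq_zero_of_lt hk]
      simp
    · simp [qbinom_self, qbinom_eq_zero_of_lt hk]
    · rw [if_pos h.le, qbinom_eq_zero_of_lt h, qbinom_eq_zero_of_lt hk,
        qbinom_eq_zero_of_lt (Nat.sub_pos_of_lt h), add_zero]
  | succ n ih =>
    obtain rfl | ⟨k, rfl⟩ : k = 0 ∨ ∃ j, k = j + 1 := by cases k <;> simp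
    · simp [qbinom_zero_right, hp.ne']
    rw [show n + 1 + p = n + p + 1 by omega, qbinom, qbinom, ih, ih]
    rcases lt_trichotomy (k + 1) p with h | rfl | h
    · simp only [if_neg (show ¬p ≤ k by omega), if_neg (show ¬p ≤ k + 1 by omega)]
      ring
    · simp only [if_neg (show ¬k + 1 ≤ k by omega), if_pos le_rfl, Nat.sub_self,
        qbinom_zero_right, he.pow_eq_one]
      ring
    · obtain ⟨j, rfl⟩ : ∃ j, k = j + p := ⟨k - p, by omega⟩
      have hpow : e ^ (j + p + 1) = e ^ (j + 1) := by
        rw [add_right_comm, pow_add, he.pow_eq_one, mul_one]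
      simp only [if_pos (show p ≤ j + p by omega), if_pos (show p ≤ j + p + 1 by omega),
        show j + p - p = j by omega, show j + p + 1 - p = j + 1 by omega, qbinom, hpow]
      ring

lemma qbinom_mul_add_mul_add_of_isPrimitiveRoot (he : IsPrimitiveRoot e p) (a c : ℕ) {b d : ℕ}
    (hb : b < p) (hd : d < p) :
    qbinom (a * p + b) (c * p + d) e = (a.choose c : ℂ) * qbinom b d e := by
  induction a generalizing c with
  | zero =>
    obtain rfl | hc := c.eq_zero_or_pos
    · simp
    rw [zero_mul, zero_add, qbinom_eq_zero_of_lt (by nlinarith), Nat.choose_eq_zero_of_lt hc,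
      Nat.cast_zero, zero_mul]
  | succ a ih =>
    rw [show (a + 1) * p + b = a * p + b + p by ring,
      qbinom_add_of_isPrimitiveRoot he (by omega)]
    obtain rfl | ⟨c, rfl⟩ : c = 0 ∨ ∃ j, c = j + 1 := by cases c <;> simp
    · rw [if_neg (by omega), ih 0]
      simp
    · rw [if_pos (by nlinarith), show (c + 1) * p + d - p = c * p + d by
        rw [add_mul, one_mul]; omega, ih (c + 1), ih c, Nat.choose_succ_succ']
      push_cast
      ring

end RootOfUnity

lemma chainT_zero (N : ℕ) (q : ℂ) : chainT 0 N q = 1 := by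
  simp only [chainT, Fin.prod_univ_zero]
  rw [sum_const, nsmul_one, Nat.cast_eq_one, card_eq_one]
  refine ⟨fun _ => Fin.last N,
    eq_singleton_iff_unique_mem.mpr ⟨by simp [monotone_const], ?_⟩⟩
  rintro f hf
  funext i
  rw [Subsingleton.elim (α := Fin 1) i (Fin.last 0), (mem_filter.mp hf).2.2]

lemma Fin.monotone_snoc {α : Type*} [Preorder α] {n : ℕ} {g : Fin (n + 1) → α} {x : α}
    (hg : Monotone g) (hx : ∀ i, g i ≤ x) : Monotone (Fin.snoc g x : Fin (n + 2) → α) := by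
  refine Fin.monotone_iff_le_succ.mpr fun i => ?_
  induction i using Fin.lastCases with
  | last => simpa only [Fin.succ_last, Fin.snoc_last, Fin.snoc_castSucc] using hx _
  | cast j =>
    simpa only [Fin.succ_castSucc, Fin.snoc_castSucc] using hg (Fin.castSucc_le_succ j)

-- The chains with `t_m = t` are exactly the chains ending at `t` with `N` put on top.
lemma chainT_succ (m N : ℕ) (q : ℂ) :
    chainT (m + 1) N q =
      ∑ t ∈ range (N + 1), q ^ (t * (t + 1)) * qbinom N t q * chainT m t q := by
  rw [chainT, ← sum_fiberwise _ (fun f : Fin (m + 2) → Fin (N + 1) => f (Fin.last m).castSucc),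
    ← Fin.sum_univ_eq_sum_range (fun t => q ^ (t * (t + 1)) * qbinom N t q * chainT m t q)]
  refine sum_congr rfl fun t _ => ?_
  rw [chainT, mul_sum]
  symm
  refine sum_bij' (fun g _ => Fin.snoc (fun j => Fin.castLE t.isLt (g j)) (Fin.last N))
    (fun f hf j => ⟨f j.castSucc, ?_⟩) ?_ ?_ ?_ ?_ ?_
  · simp only [mem_filter, mem_univ, true_and] at hf
    obtain ⟨⟨hmono, -⟩, rfl⟩ := hf
    exact Nat.lt_succ_of_le (hmono (Fin.castSucc_le_castSucc_iff.mpr (Fin.le_last j)))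
  · intro g hg
    simp only [mem_filter, mem_univ, true_and] at hg ⊢
    obtain ⟨hmono, hlast⟩ := hg
    refine ⟨⟨Fin.monotone_snoc (fun i j hij => hmono hij) fun _ => Fin.le_last _,
      Fin.snoc_last _ _⟩, Fin.ext (by simp [hlast])⟩
  · intro f hf
    simp only [mem_filter, mem_univ, true_and] at hf ⊢
    obtain ⟨⟨hmono, -⟩, rfl⟩ := hf
    exact ⟨fun i j hij => hmono (Fin.castSucc_le_castSucc_iff.mpr hij), rfl⟩
  · intro g _
    funext j
    simp
  · intro f hf
    have hlast := (mem_filter.mp (mem_filter.mp hf).1).2.2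
    funext i
    induction i using Fin.lastCases with
    | last => rw [Fin.snoc_last, hlast]
    | cast j => rw [Fin.snoc_castSucc]; rfl
  · intro g hg
    have hlast := (mem_filter.mp hg).2.2
    rw [Fin.prod_univ_castSucc]
    simp only [Fin.snoc_castSucc, Fin.succ_castSucc, Fin.succ_last, Fin.snoc_last,
      Fin.val_castLE, hlast, Fin.val_last]
    ring

lemma chainT_succ_eq_sum_range (m : ℕ) {N M : ℕ} (hNM : N < M) (q : ℂ) :
    chainT (m + 1) N q = ∑ t ∈ range M, q ^ (t * (t + 1)) * qbinom N t q * chainT m t q := by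
  rw [chainT_succ]
  refine sum_subset (range_subset_range.mpr hNM) fun t _ ht => ?_
  rw [qbinom_eq_zero_of_lt (by simpa using ht), mul_zero, zero_mul]

lemma Finset.sum_range_mul_eq_sum_sum {M : Type*} [AddCommMonoid M] (a p : ℕ) (f : ℕ → M) :
    ∑ t ∈ range (a * p), f t = ∑ s ∈ range a, ∑ r ∈ range p, f (s * p + r) := by
  induction a with
  | zero => simp
  | succ a ih => rw [add_mul, one_mul, sum_range_add, ih, sum_range_succ]

theorem chainT_mul_add_of_isPrimitiveRoot {p : ℕ} {e : ℂ} (he : IsPrimitiveRoot e p) (m : ℕ)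
    {n : ℕ} (hn : n < p) (k : ℕ) :
    chainT m (k * p + n) e = ((m + 1 : ℕ) : ℂ) ^ k * chainT m n e := by
  induction m generalizing n k with
  | zero => simp [chainT_zero]
  | succ m ih =>
    have hsummand : ∀ s r, r < p → e ^ ((s * p + r) * (s * p + r + 1)) *
        qbinom (k * p + n) (s * p + r) e * chainT m (s * p + r) e =
        (k.choose s * ((m + 1 : ℕ) : ℂ) ^ s) *
          (e ^ (r * (r + 1)) * qbinom n r e * chainT m r e) := by
      intro s r hr
      have hpow : e ^ ((s * p + r) * (s * p + r + 1)) = e ^ (r * (r + 1)) := by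
        rw [show (s * p + r) * (s * p + r + 1) = r * (r + 1) + (s * s * p + 2 * s * r + s) * p by
          ring, pow_add, pow_mul' e _ p, he.pow_eq_one, one_pow, mul_one]
      rw [hpow, qbinom_mul_add_mul_add_of_isPrimitiveRoot he k s hn hr, ih hr]
      ring
    calc chainT (m + 1) (k * p + n) e
        = ∑ s ∈ range (k + 1), ∑ r ∈ range p, e ^ ((s * p + r) * (s * p + r + 1)) *
            qbinom (k * p + n) (s * p + r) e * chainT m (s * p + r) e := by
          rw [chainT_succ_eq_sum_range m (M := (k + 1) * p) (by nlinarith),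
            sum_range_mul_eq_sum_sum]
      _ = (∑ s ∈ range (k + 1), k.choose s * ((m + 1 : ℕ) : ℂ) ^ s) *
            ∑ r ∈ range p, e ^ (r * (r + 1)) * qbinom n r e * chainT m r e := by
          rw [sum_mul_sum]
          exact sum_congr rfl fun s _ => sum_congr rfl fun r hr => hsummand s r (by simpa using hr)
      _ = ((m + 1 + 1 : ℕ) : ℂ) ^ k * chainT (m + 1) n e := by
          rw [chainT_succ_eq_sum_range m hn, Nat.cast_succ (m + 1), add_pow]
          congr 1
          exact sum_congr rfl fun s _ => by rw [one_pow, mul_one, mul_comm]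

theorem stmt6 (p : ℕ) (hp : 1 ≤ p) (e : ℂ) (he : IsPrimitiveRoot e p)
    (m : ℕ) (hm : 1 ≤ m) (k n : ℕ) (hn : n ≤ p - 1) :
    chainT (m - 1) (k * p + n) e = (m : ℂ) ^ k * chainT (m - 1) n e := by
  obtain ⟨m, rfl⟩ : ∃ j, m = j + 1 := ⟨m - 1, by omega⟩
  simpa using chainT_mul_add_of_isPrimitiveRoot he m (show n < p by omega) k
end

section
/- Let p ≥ 3 be an odd integer, set e_p := exp(2πi/p) and e_p^w := exp(2πi w/p) for w ∈ ℂ. Then for every λ ∈ ℂ and every natural number m with (p−1)/2 ≤ m ≤ p−2: Σ_{n=0}^{p−1} ( e_p^{λ+2n+1} + e_p^{−(λ+2n+1)} − 2 ) · σ_m( e_p^{λ+2n+1}, e_p ) = 0. -/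
/-- `e_p := exp(2πi/p)`. -/
noncomputable def ep (p : ℕ) : ℂ :=
  Complex.exp (2 * Real.pi * Complex.I / p)

/-- `e_p^w := exp(2πi w / p)`. -/
noncomputable def epow (p : ℕ) (w : ℂ) : ℂ :=
  Complex.exp (2 * Real.pi * Complex.I * w / p)

/-- `σ_m(x,ζ) = ∏_{i=1}^{m} (x + x⁻¹ − ζ^i − ζ^{−i})`. -/
noncomputable def sigma' (m : ℕ) (x ζ : ℂ) : ℂ :=
  ∏ i ∈ Finset.Icc 1 m, (x + x⁻¹ - ζ ^ i - (ζ ^ i)⁻¹)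

/-!
Write `ζ = e_p` and `x = e_p^{λ+2n+1}`. Each factor of `σ_m(x, ζ)` is `(x - ζ^i)(x - ζ^{-i}) / x`,
and since `m ≥ (p-1)/2` the exponents `±1, …, ±m` cover every nonzero residue mod `p`, those in
`[p-m, m]` twice. Hence the `n`-th summand is `(x^p - 1) G(x) / x^{m+1}` with
`G = (X - 1) ∏_{p-m ≤ j ≤ m} (X - ζ^j)` of degree `2m + 2 - p ≤ m`. As `n` varies, `x = c ω^n`
runs over a coset of the `p`-th roots of unity (`ω = ζ²` is primitive because `p` is odd), so
`x^p` is constant, while `G(x) / x^{m+1}` is a combination of `x^{-1}, …, x^{-(m+1)}`, whose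
sums over the coset vanish because `m + 1 < p`.
-/

open Finset Polynomial

theorem prod_Icc_mul_reflect_eq {M : Type*} [CommMonoid M] (f : ℕ → M) {p m : ℕ}
    (hm1 : p ≤ 2 * m + 1) (hm2 : m < p) :
    ∏ i ∈ Icc 1 m, (f i * f (p - i)) = (∏ j ∈ Ico 1 p, f j) * ∏ j ∈ Icc (p - m) m, f j := by
  have hreflect : ∏ i ∈ Icc 1 m, f (p - i) = ∏ j ∈ Ico (p - m) p, f j := by
    refine prod_nbij' (p - ·) (p - ·) ?_ ?_ ?_ ?_ fun _ _ => rfl <;>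
      intro i hi <;> simp only [mem_Icc, mem_Ico] at hi ⊢ <;> omega
  have hunion : Icc 1 m ∪ Ico (p - m) p = Ico 1 p := by
    ext; simp only [mem_union, mem_Icc, mem_Ico]; omega
  have hinter : Icc 1 m ∩ Ico (p - m) p = Icc (p - m) m := by
    ext; simp only [mem_inter, mem_Icc, mem_Ico]; omega
  rw [prod_mul_distrib, hreflect, ← prod_union_inter, hunion, hinter]

section Field

variable {K : Type*} [Field K] {p : ℕ} {ζ : K}

theorem add_inv_sub_sub_inv_eq {x a : K} (hx : x ≠ 0) (ha : a ≠ 0) :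
    x + x⁻¹ - a - a⁻¹ = (x - a) * (x - a⁻¹) / x := by
  field_simp
  ring

theorem IsPrimitiveRoot.sub_one_mul_prod_Ico_sub_pow (hζ : IsPrimitiveRoot ζ p) (hp : 0 < p)
    (x : K) : (x - 1) * ∏ j ∈ Ico 1 p, (x - ζ ^ j) = x ^ p - 1 := by
  have h := congrArg (eval x) (X_pow_sub_C_eq_prod hζ hp (one_pow p))
  simp only [eval_sub, eval_pow, eval_X, eval_C, eval_prod, mul_one] at h
  rw [h, range_eq_Ico, prod_eq_prod_Ico_succ_bot hp, pow_zero]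

theorem IsPrimitiveRoot.sum_mul_pow_pow_eq_zero (hζ : IsPrimitiveRoot ζ p) (c : K) {j : ℕ}
    (hj : ¬ p ∣ j) : ∑ n ∈ range p, (c * ζ ^ n) ^ j = 0 := by
  have hne : ζ ^ j ≠ 1 := fun h => hj ((hζ.pow_eq_one_iff_dvd j).1 h)
  have hpow : (ζ ^ j) ^ p = 1 := by rw [← pow_mul, mul_comm, pow_mul, hζ.pow_eq_one, one_pow]
  calc ∑ n ∈ range p, (c * ζ ^ n) ^ j = c ^ j * ∑ n ∈ range p, (ζ ^ j) ^ n := by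
        rw [mul_sum]
        refine sum_congr rfl fun n _ => ?_
        rw [mul_pow, ← pow_mul, ← pow_mul, mul_comm j n]
    _ = 0 := by rw [geom_sum_eq hne, hpow, sub_self, zero_div, mul_zero]

theorem IsPrimitiveRoot.sum_eval_div_pow_eq_zero (hζ : IsPrimitiveRoot ζ p) {c : K} (hc : c ≠ 0)
    {G : K[X]} {j : ℕ} (hG : G.natDegree < j) (hj : j < p) :
    ∑ n ∈ range p, G.eval (c * ζ ^ n) / (c * ζ ^ n) ^ j = 0 := by
  have hterm (n : ℕ) : G.eval (c * ζ ^ n) / (c * ζ ^ n) ^ j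
      = ∑ k ∈ range j, G.coeff k * (c⁻¹ * ζ⁻¹ ^ n) ^ (j - k) := by
    have hx : c * ζ ^ n ≠ 0 := mul_ne_zero hc (pow_ne_zero _ (hζ.ne_zero (by omega)))
    rw [eval_eq_sum_range' hG, sum_div]
    refine sum_congr rfl fun k hk => ?_
    rw [inv_pow, ← mul_inv, inv_pow, pow_sub₀ _ hx (mem_range.1 hk).le, mul_inv, inv_inv]
    ring
  rw [sum_congr rfl fun n _ => hterm n, sum_comm]
  refine sum_eq_zero fun k hk => ?_
  rw [← mul_sum, hζ.inv.sum_mul_pow_pow_eq_zero, mul_zero]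
  have := mem_range.1 hk
  exact Nat.not_dvd_of_pos_of_lt (by omega) (by omega)

end Field

theorem mul_sigma'_eq {p m : ℕ} {ζ x : ℂ} (hζ : IsPrimitiveRoot ζ p) (hm1 : p ≤ 2 * m + 1)
    (hm2 : m < p) (hx : x ≠ 0) :
    (x + x⁻¹ - 2) * sigma' m x ζ
      = (x ^ p - 1) * ((x - 1) * ∏ j ∈ Icc (p - m) m, (x - ζ ^ j)) / x ^ (m + 1) := by
  have hζ0 : ζ ≠ 0 := hζ.ne_zero (by omega)
  have hfactor : ∀ i ∈ Icc 1 m,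
      x + x⁻¹ - ζ ^ i - (ζ ^ i)⁻¹ = (x - ζ ^ i) * (x - ζ ^ (p - i)) / x := by
    intro i hi
    have hip : i ≤ p := by simp only [mem_Icc] at hi; omega
    rw [add_inv_sub_sub_inv_eq hx (pow_ne_zero i hζ0), pow_sub₀ ζ hζ0 hip, hζ.pow_eq_one,
      one_mul]
  have hsigma : sigma' m x ζ
      = (∏ j ∈ Ico 1 p, (x - ζ ^ j)) * (∏ j ∈ Icc (p - m) m, (x - ζ ^ j)) / x ^ m := by
    rw [sigma', prod_congr rfl hfactor, prod_div_distrib,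
      prod_Icc_mul_reflect_eq (fun j => x - ζ ^ j) hm1 hm2, prod_const, Nat.card_Icc,
      Nat.add_sub_cancel]
  rw [hsigma, ← hζ.sub_one_mul_prod_Ico_sub_pow (by omega) x]
  field_simp
  ring

theorem epow_neg (p : ℕ) (w : ℂ) : epow p (-w) = (epow p w)⁻¹ := by
  rw [epow, epow, ← Complex.exp_neg]
  ring_nf

theorem epow_add_natCast (p : ℕ) (w : ℂ) (n : ℕ) : epow p (w + n) = epow p w * ep p ^ n := by
  rw [epow, epow, ep, ← Complex.exp_nat_mul, ← Complex.exp_add]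
  ring_nf

theorem stmt10 (p : ℕ) (hp : 3 ≤ p) (hodd : Odd p) (lam : ℂ)
    (m : ℕ) (hm1 : (p - 1) / 2 ≤ m) (hm2 : m ≤ p - 2) :
    ∑ n ∈ Finset.range p,
        (epow p (lam + 2 * n + 1) + epow p (-(lam + 2 * n + 1)) - 2) *
          sigma' m (epow p (lam + 2 * n + 1)) (ep p) = 0 := by
  have hpm : p ≤ 2 * m + 1 := by obtain ⟨r, rfl⟩ := hodd; omega
  have hζ : IsPrimitiveRoot (ep p) p := Complex.isPrimitiveRoot_exp p (by omega)
  have hω : IsPrimitiveRoot (ep p ^ 2) p := hζ.pow_of_coprime 2 (Nat.coprime_two_left.2 hodd)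
  set c := epow p (lam + 1)
  have hc : c ≠ 0 := Complex.exp_ne_zero _
  have hpoint (n : ℕ) : epow p (lam + 2 * n + 1) = c * (ep p ^ 2) ^ n := by
    rw [← pow_mul, ← epow_add_natCast]
    push_cast
    ring_nf
  have hpow (n : ℕ) : (c * (ep p ^ 2) ^ n) ^ p = c ^ p := by
    rw [mul_pow, ← pow_mul, mul_comm n p, pow_mul, hω.pow_eq_one, one_pow, mul_one]
  set G : ℂ[X] := (X - C 1) * ∏ j ∈ Icc (p - m) m, (X - C (ep p ^ j))
  have hG : G.natDegree < m + 1 := by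
    refine natDegree_mul_le.trans_lt ?_
    rw [natDegree_X_sub_C, natDegree_finsetProd_X_sub_C_eq_card, Nat.card_Icc]
    omega
  calc _ = ∑ n ∈ range p, (c ^ p - 1) *
        (G.eval (c * (ep p ^ 2) ^ n) / (c * (ep p ^ 2) ^ n) ^ (m + 1)) := by
        refine sum_congr rfl fun n _ => ?_
        have hx : c * (ep p ^ 2) ^ n ≠ 0 := mul_ne_zero hc (by simp [ep])
        rw [epow_neg, hpoint, mul_sigma'_eq hζ hpm (by omega) hx, hpow]
        simp [G, eval_prod, mul_div_assoc]
    _ = 0 := by rw [← mul_sum, hω.sum_eval_div_pow_eq_zero hc hG (by omega), mul_zero]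
end
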